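/- A set U of arcs on n points equals the set of arcs corresponding to the uncontracted join-irreducible permutations of some lattice congruence on the weak order on S_n if and only if U is closed under passing to subarcs. -/

import Mathlib

/-- A (combinatorial, type-A) arc on the points of `Fin n`: endpoints `p < q`
together with the set `R` of interior points passed on the right. -/
structure Arc (n : ℕ) where
  p : Fin n
  q : Fin n
  R : Finset (Fin n)
  hpq : p < q
  hR : ∀ i ∈ R, p < i ∧ i < q

namespace Arc

variable {n : ℕ}

/-- The side of the arc `α` at a point `i` of its closed interval:
`0` at endpoints, `1` if `i` is right of `α`, `-1` if left. -/
def sgn (α : Arc n) (i : Fin n) : ℤ :=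
  if i = α.p ∨ i = α.q then 0 else if i ∈ α.R then 1 else -1

/-- Two arcs cross if their relative horizontal order flips somewhere on the
intersection of their closed intervals of points. -/
def Crosses (α β : Arc n) : Prop :=
  ∃ i j : Fin n, max α.p β.p ≤ i ∧ i < j ∧ j ≤ min α.q β.q ∧
    (sgn α i - sgn β i) * (sgn α j - sgn β j) < 0

/-- Two arcs are compatible if they do not share an upper endpoint, do not share
a lower endpoint, and do not cross. -/
def Compatible (α β : Arc n) : Prop :=
  α.p ≠ β.p ∧ α.q ≠ β.q ∧ ¬ Crosses α β

end Arc

/-- A noncrossing arc diagram: a set of pairwise compatible arcs. -/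
def IsNCAD {n : ℕ} (D : Set (Arc n)) : Prop :=
  ∀ α ∈ D, ∀ β ∈ D, α ≠ β → Arc.Compatible α β

/-- The arc diagram `δ(π)` of a permutation `π`: one arc per descent, with
lower endpoint `π (i+1)`, upper endpoint `π i`, passing right of exactly the
intermediate values occurring after position `i`. -/
def diagram {n : ℕ} (π : Equiv.Perm (Fin n)) : Set (Arc n) :=
  {α | ∃ (i : Fin n) (h : (i : ℕ) + 1 < n),
     π ⟨(i : ℕ) + 1, h⟩ < π i ∧ α.p = π ⟨(i : ℕ) + 1, h⟩ ∧ α.q = π i ∧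
     ∀ x : Fin n, x ∈ α.R ↔ ∃ j : Fin n, i < j ∧ π j = x ∧ α.p < x ∧ x < α.q}

/-- The (right weak order) inversion set of a permutation: pairs of values
`a < b` with `a` occurring after `b` in one-line notation. -/
def invSet {n : ℕ} (π : Equiv.Perm (Fin n)) : Set (Fin n × Fin n) :=
  {p | p.1 < p.2 ∧ π.symm p.2 < π.symm p.1}

/-- The right weak order on the symmetric group: containment of inversion sets. -/
def wle {n : ℕ} (u w : Equiv.Perm (Fin n)) : Prop := invSet u ⊆ invSet w

/-- `m` is the join of `x` and `y` in weak order. -/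
def IsLUBw {n : ℕ} (x y m : Equiv.Perm (Fin n)) : Prop :=
  wle x m ∧ wle y m ∧ ∀ b, wle x b → wle y b → wle m b

/-- `m` is the meet of `x` and `y` in weak order. -/
def IsGLBw {n : ℕ} (x y m : Equiv.Perm (Fin n)) : Prop :=
  wle m x ∧ wle m y ∧ ∀ b, wle b x → wle b y → wle b m

/-- A lattice congruence of the weak order: an equivalence relation compatible
with joins and meets. -/
def IsWeakCong {n : ℕ} (r : Setoid (Equiv.Perm (Fin n))) : Prop :=
  (∀ x1 x2 y1 y2 m1 m2, r.r x1 x2 → r.r y1 y2 →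
      IsLUBw x1 y1 m1 → IsLUBw x2 y2 m2 → r.r m1 m2) ∧
  (∀ x1 x2 y1 y2 m1 m2, r.r x1 x2 → r.r y1 y2 →
      IsGLBw x1 y1 m1 → IsGLBw x2 y2 m2 → r.r m1 m2)

/-- `u` is covered by `w` in the weak order. -/
def CovW {n : ℕ} (u w : Equiv.Perm (Fin n)) : Prop :=
  wle u w ∧ u ≠ w ∧ ∀ v, wle u v → wle v w → v = u ∨ v = w

/-- A join-irreducible permutation `j` is contracted by the congruence `r`
if it is congruent to the unique element it covers. -/
def ContractsJ {n : ℕ} (r : Setoid (Equiv.Perm (Fin n))) (j : Equiv.Perm (Fin n)) : Prop :=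
  ∃ y, CovW y j ∧ r.r j y

/-- `α'` is a subarc of `α`. -/
def Subarc {n : ℕ} (α' α : Arc n) : Prop :=
  α.p ≤ α'.p ∧ α'.q ≤ α.q ∧
    ∀ x : Fin n, x ∈ α'.R ↔ (x ∈ α.R ∧ α'.p < x ∧ x < α'.q)

/-!
Inversion sets of permutations of `Fin n` are exactly the sets of increasing pairs that are
transitive and split at every intermediate value. Hence the weak order is a lattice: the join of
`x` and `y` inverts the transitive closure of their inversions, and meets are joins after reversing
positions. The join-irreducible `j_α` of an arc `α` inverts the pairs `a < b` with `a` the bottom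
endpoint or right of `α` and `b` the top endpoint or left of `α`; its unique lower cover `j_α⁻`
inverts the same pairs except `(α.p, α.q)`.

If `α'` is a subarc of `α`, let `w` be generated by the inversions of `α` restricted to
`[α.p, α'.p]` and to `[α'.q, α.q]`. Then `j_α ≤ j_α' ∨ w`, while `j_α'⁻ ∨ w` does not invert
`(α.p, α.q)`. So if a congruence contracts `j_α'`, then `j_α` is congruent to
`j_α ∧ (j_α'⁻ ∨ w) ≤ j_α⁻`, and `j_α` is contracted too.

Conversely, for `U` closed under subarcs, call two permutations congruent when they lie above the
same `j_β` with `β ∈ U`. This respects meets trivially, and it respects joins because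
`j_β ≤ x ∨ y` holds exactly when `β` can be cut into subarcs each lying below `x` or below `y`,
and these subarcs are again in `U`.
-/

open Relation

variable {n : ℕ}

lemma invSet_trans {π : Equiv.Perm (Fin n)} {a b c : Fin n}
    (hab : (a, b) ∈ invSet π) (hbc : (b, c) ∈ invSet π) : (a, c) ∈ invSet π :=
  ⟨hab.1.trans hbc.1, hbc.2.trans hab.2⟩

lemma invSet_split {π : Equiv.Perm (Fin n)} {a b c : Fin n} (hac : (a, c) ∈ invSet π)
    (hab : a < b) (hbc : b < c) : (a, b) ∈ invSet π ∨ (b, c) ∈ invSet π := by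
  rcases lt_or_ge (π.symm b) (π.symm a) with h | h
  · exact Or.inl ⟨hab, h⟩
  · exact Or.inr ⟨hbc, hac.2.trans_le h⟩

lemma wle_refl (π : Equiv.Perm (Fin n)) : wle π π := subset_rfl

lemma wle_trans {u v w : Equiv.Perm (Fin n)} (huv : wle u v) (hvw : wle v w) : wle u w :=
  huv.trans hvw

structure IsInversionSet (S : Set (Fin n × Fin n)) : Prop where
  lt : ∀ {a b}, (a, b) ∈ S → a < b
  trans : ∀ {a b c}, (a, b) ∈ S → (b, c) ∈ S → (a, c) ∈ S
  split : ∀ {a b c}, (a, c) ∈ S → a < b → b < c → (a, b) ∈ S ∨ (b, c) ∈ S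

lemma isInversionSet_invSet (π : Equiv.Perm (Fin n)) : IsInversionSet (invSet π) :=
  ⟨fun h => h.1, invSet_trans, invSet_split⟩

/-- `w` occurs before `v` in every permutation whose inversion set is `S`. -/
def Precedes (S : Set (Fin n × Fin n)) (w v : Fin n) : Prop :=
  (w < v ∧ (w, v) ∉ S) ∨ (v < w ∧ (v, w) ∈ S)

lemma precedes_invSet_iff {π : Equiv.Perm (Fin n)} {w v : Fin n} :
    Precedes (invSet π) w v ↔ π.symm w < π.symm v := by
  have := π.symm.injective.eq_iff (a := w) (b := v)
  simp only [Precedes, invSet, Set.mem_ofPred_eq]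
  grind

lemma precedes_irrefl {S : Set (Fin n × Fin n)} (v : Fin n) : ¬ Precedes S v v := by
  rintro (⟨h, _⟩ | ⟨h, _⟩) <;> exact lt_irrefl _ h

lemma precedes_or_precedes {S : Set (Fin n × Fin n)} {w v : Fin n} (h : w ≠ v) :
    Precedes S w v ∨ Precedes S v w := by
  unfold Precedes
  grind

lemma ncard_precedes_lt (S : Set (Fin n × Fin n)) (v : Fin n) :
    {w | Precedes S w v}.ncard < n := by
  have hss : {w | Precedes S w v} ⊂ Set.univ :=
    Set.ssubset_univ_iff.2 fun h => precedes_irrefl v (h ▸ Set.mem_univ v)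
  simpa using Set.ncard_lt_ncard hss Set.finite_univ

noncomputable def position (S : Set (Fin n × Fin n)) (v : Fin n) : Fin n :=
  ⟨{w | Precedes S w v}.ncard, ncard_precedes_lt S v⟩

lemma symm_eq_position (π : Equiv.Perm (Fin n)) : ⇑π.symm = position (invSet π) := by
  funext v
  have hset : {w | Precedes (invSet π) w v} = π '' Set.Iio (π.symm v) := by
    ext w
    simp [precedes_invSet_iff]
  ext
  change _ = Set.ncard _
  rw [hset, Set.ncard_image_of_injective _ π.injective, ← Finset.coe_Iio,
    Set.ncard_coe_finset, Fin.card_Iio]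

lemma invSet_injective : Function.Injective (invSet : Equiv.Perm (Fin n) → _) := by
  intro π σ h
  have hsymm : π.symm = σ.symm :=
    DFunLike.coe_injective (by rw [symm_eq_position, h, symm_eq_position])
  simpa using congrArg Equiv.symm hsymm

lemma wle_antisymm {π σ : Equiv.Perm (Fin n)} (h1 : wle π σ) (h2 : wle σ π) : π = σ :=
  invSet_injective (h1.antisymm h2)

namespace IsInversionSet

variable {S : Set (Fin n × Fin n)} (hS : IsInversionSet S)
include hS

lemma precedes_trans {u v w : Fin n} (huv : Precedes S u v) (hvw : Precedes S v w) :
    Precedes S u w := by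
  have := @hS.trans; have := @hS.split
  unfold Precedes at *
  grind

lemma position_lt_position {u v : Fin n} (h : Precedes S u v) : position S u < position S v :=
  Set.ncard_lt_ncard ⟨fun _ hw => hS.precedes_trans hw h, fun hc => precedes_irrefl u (hc h)⟩
    (Set.toFinite _)

lemma position_injective : Function.Injective (position S) := by
  intro u v h
  by_contra hne
  rcases precedes_or_precedes hne with huv | hvu
  · exact (hS.position_lt_position huv).ne h
  · exact (hS.position_lt_position hvu).ne h.symm

noncomputable def perm : Equiv.Perm (Fin n) :=
  (Equiv.ofBijective (position S) (Finite.injective_iff_bijective.mp hS.position_injective)).symm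

lemma perm_symm_apply (v : Fin n) : hS.perm.symm v = position S v := by
  simp [perm]

lemma invSet_perm : invSet hS.perm = S := by
  ext ⟨a, b⟩
  simp only [invSet, Set.mem_ofPred_eq, perm_symm_apply]
  constructor
  · rintro ⟨hab, hpos⟩
    by_contra hab'
    exact (hS.position_lt_position (Or.inl ⟨hab, hab'⟩)).not_gt hpos
  · intro h
    exact ⟨hS.lt h, hS.position_lt_position (Or.inr ⟨hS.lt h, h⟩)⟩

end IsInversionSet

lemma Relation.TransGen.backward_invariant {α : Type*} {r : α → α → Prop} {P : α → Prop}
    (hr : ∀ a b, r a b → P b → P a) {a b : α} (hab : TransGen r a b) (hb : P b) : P a := by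
  induction hab with
  | single h => exact hr _ _ h hb
  | tail _ h ih => exact ih (hr _ _ h hb)

structure IsSplitRel (s : Fin n → Fin n → Prop) : Prop where
  lt : ∀ {a b}, s a b → a < b
  split : ∀ {a b c}, s a c → a < b → b < c → s a b ∨ s b c

lemma IsInversionSet.isSplitRel {S : Set (Fin n × Fin n)} (hS : IsInversionSet S) :
    IsSplitRel (fun a b => (a, b) ∈ S) :=
  ⟨hS.lt, hS.split⟩

lemma IsSplitRel.sup {s t : Fin n → Fin n → Prop} (hs : IsSplitRel s) (ht : IsSplitRel t) :
    IsSplitRel (s ⊔ t) where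
  lt h := h.elim hs.lt ht.lt
  split h hab hbc := h.elim (fun h => (hs.split h hab hbc).imp Or.inl Or.inl)
    (fun h => (ht.split h hab hbc).imp Or.inr Or.inr)

namespace IsSplitRel

variable {s : Fin n → Fin n → Prop} (hs : IsSplitRel s)
include hs

lemma lt_of_transGen {a b : Fin n} (h : TransGen s a b) : a < b := by
  induction h with
  | single h => exact hs.lt h
  | tail _ h ih => exact ih.trans (hs.lt h)

lemma transGen_split {a b c : Fin n} (h : TransGen s a c) (hab : a < b) (hbc : b < c) :
    TransGen s a b ∨ TransGen s b c := by
  induction h generalizing b with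
  | single h => exact (hs.split h hab hbc).imp .single .single
  | @tail c' c hac' hc'c ih =>
    rcases lt_trichotomy b c' with hb | rfl | hb
    · exact (ih hab hb).imp id (·.tail hc'c)
    · exact Or.inl hac'
    · exact (hs.split hc'c hb hbc).imp hac'.tail .single

lemma isInversionSet_transGen : IsInversionSet {pr : Fin n × Fin n | TransGen s pr.1 pr.2} :=
  ⟨hs.lt_of_transGen, .trans, hs.transGen_split⟩

end IsSplitRel

def joinInvSet (x y : Equiv.Perm (Fin n)) : Set (Fin n × Fin n) :=
  {pr | TransGen (fun a b => (a, b) ∈ invSet x ∨ (a, b) ∈ invSet y) pr.1 pr.2}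

lemma isInversionSet_joinInvSet (x y : Equiv.Perm (Fin n)) : IsInversionSet (joinInvSet x y) :=
  ((isInversionSet_invSet x).isSplitRel.sup
    (isInversionSet_invSet y).isSplitRel).isInversionSet_transGen

noncomputable def wjoin (x y : Equiv.Perm (Fin n)) : Equiv.Perm (Fin n) :=
  (isInversionSet_joinInvSet x y).perm

lemma invSet_wjoin (x y : Equiv.Perm (Fin n)) : invSet (wjoin x y) = joinInvSet x y :=
  IsInversionSet.invSet_perm _

lemma invSet_subset_joinInvSet_left (x y : Equiv.Perm (Fin n)) : invSet x ⊆ joinInvSet x y :=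
  fun _ h => .single (Or.inl h)

lemma invSet_subset_joinInvSet_right (x y : Equiv.Perm (Fin n)) : invSet y ⊆ joinInvSet x y :=
  fun _ h => .single (Or.inr h)

lemma joinInvSet_subset {x y b : Equiv.Perm (Fin n)} (hx : wle x b) (hy : wle y b) :
    joinInvSet x y ⊆ invSet b := by
  rintro ⟨u, v⟩ (h : TransGen _ u v)
  induction h with
  | single h => exact h.elim (@hx _) (@hy _)
  | tail _ h ih => exact invSet_trans ih (h.elim (@hx _) (@hy _))

lemma isLUBw_wjoin (x y : Equiv.Perm (Fin n)) : IsLUBw x y (wjoin x y) := by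
  refine ⟨?_, ?_, fun b hx hy => ?_⟩ <;> rw [wle, invSet_wjoin]
  exacts [invSet_subset_joinInvSet_left x y, invSet_subset_joinInvSet_right x y,
    joinInvSet_subset hx hy]

lemma IsLUBw.eq_wjoin {x y m : Equiv.Perm (Fin n)} (h : IsLUBw x y m) : m = wjoin x y :=
  let hj := isLUBw_wjoin x y
  wle_antisymm (h.2.2 _ hj.1 hj.2.1) (hj.2.2 _ h.1 h.2.1)

lemma IsGLBw.wle_iff {x y m b : Equiv.Perm (Fin n)} (h : IsGLBw x y m) :
    wle b m ↔ wle b x ∧ wle b y :=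
  ⟨fun hb => ⟨wle_trans hb h.1, wle_trans hb h.2.1⟩, fun hb => h.2.2 b hb.1 hb.2⟩

/-- Reversing the positions complements the inversion set, which turns meets into joins. -/
def revPos (π : Equiv.Perm (Fin n)) : Equiv.Perm (Fin n) := Fin.revPerm.trans π

lemma revPos_revPos (π : Equiv.Perm (Fin n)) : revPos (revPos π) = π := by
  ext x
  simp [revPos]

lemma mem_invSet_revPos {π : Equiv.Perm (Fin n)} {a b : Fin n} :
    (a, b) ∈ invSet (revPos π) ↔ a < b ∧ (a, b) ∉ invSet π := by
  have hinj := π.symm.injective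
  simp only [invSet, revPos, Set.mem_ofPred_eq, Equiv.symm_trans_apply, Fin.revPerm_symm,
    Fin.revPerm_apply, Fin.rev_lt_rev, not_and, not_lt]
  constructor
  · rintro ⟨hab, h⟩
    exact ⟨hab, fun _ => h.le⟩
  · rintro ⟨hab, h⟩
    exact ⟨hab, (h hab).lt_of_ne (hinj.ne hab.ne)⟩

lemma wle_revPos_iff {u w : Equiv.Perm (Fin n)} : wle (revPos w) (revPos u) ↔ wle u w := by
  simp only [wle, Set.subset_def, Prod.forall, mem_invSet_revPos]
  constructor
  · intro h a b hab
    by_contra hw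
    exact (h a b ⟨hab.1, hw⟩).2 hab
  · intro h a b ⟨hab, hw⟩
    exact ⟨hab, fun hu => hw (h a b hu)⟩

noncomputable def wmeet (x y : Equiv.Perm (Fin n)) : Equiv.Perm (Fin n) :=
  revPos (wjoin (revPos x) (revPos y))

lemma isGLBw_wmeet (x y : Equiv.Perm (Fin n)) : IsGLBw x y (wmeet x y) := by
  obtain ⟨hx, hy, hle⟩ := isLUBw_wjoin (revPos x) (revPos y)
  refine ⟨?_, ?_, fun b hbx hby => ?_⟩
  · rwa [← wle_revPos_iff, wmeet, revPos_revPos]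
  · rwa [← wle_revPos_iff, wmeet, revPos_revPos]
  · rw [← wle_revPos_iff, wmeet, revPos_revPos]
    exact hle _ (wle_revPos_iff.2 hbx) (wle_revPos_iff.2 hby)

namespace Arc

@[ext] lemma ext {α β : Arc n} (hp : α.p = β.p) (hq : α.q = β.q) (hR : α.R = β.R) : α = β := by
  cases α; cases β; simp_all

def bottomOrRight (α : Arc n) : Set (Fin n) := {u | u = α.p ∨ u ∈ α.R}

def topOrLeft (α : Arc n) : Set (Fin n) := {v | v = α.q ∨ (α.p < v ∧ v < α.q ∧ v ∉ α.R)}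

/-- The inversion set of the join-irreducible permutation whose arc is `α`. -/
def invs (α : Arc n) : Set (Fin n × Fin n) :=
  {pr | pr.1 < pr.2 ∧ pr.1 ∈ α.bottomOrRight ∧ pr.2 ∈ α.topOrLeft}

variable {α : Arc n} {u v : Fin n}

lemma mem_invs {a b : Fin n} : (a, b) ∈ α.invs ↔
    a < b ∧ (a = α.p ∨ a ∈ α.R) ∧ (b = α.q ∨ (α.p < b ∧ b < α.q ∧ b ∉ α.R)) :=
  Iff.rfl

lemma p_le_of_mem_bottomOrRight (h : u ∈ α.bottomOrRight) : α.p ≤ u := by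
  rcases h with rfl | h
  exacts [le_rfl, (α.hR u h).1.le]

lemma p_lt_of_mem_topOrLeft (h : v ∈ α.topOrLeft) : α.p < v := by
  rcases h with rfl | h
  exacts [α.hpq, h.1]

lemma le_q_of_mem_topOrLeft (h : v ∈ α.topOrLeft) : v ≤ α.q := by
  rcases h with rfl | h
  exacts [le_rfl, h.2.1.le]

lemma notMem_topOrLeft_of_mem_bottomOrRight (h : v ∈ α.bottomOrRight) : v ∉ α.topOrLeft := by
  intro h'
  rcases h with rfl | h
  · exact lt_irrefl _ (p_lt_of_mem_topOrLeft h')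
  · rcases h' with rfl | h'
    exacts [lt_irrefl _ (α.hR _ h).2, h'.2.2 h]

lemma mem_bottomOrRight_or_topOrLeft (h1 : α.p < v) (h2 : v < α.q) :
    v ∈ α.bottomOrRight ∨ v ∈ α.topOrLeft := by
  by_cases hv : v ∈ α.R
  · exact Or.inl (Or.inr hv)
  · exact Or.inr (Or.inr ⟨h1, h2, hv⟩)

lemma top_mem_invs (α : Arc n) : (α.p, α.q) ∈ α.invs :=
  ⟨α.hpq, Or.inl rfl, Or.inl rfl⟩

lemma isInversionSet_invs (α : Arc n) : IsInversionSet α.invs where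
  lt h := h.1
  trans h1 h2 := absurd h1.2.2 (notMem_topOrLeft_of_mem_bottomOrRight h2.2.1)
  split {a b c} h hab hbc := by
    rcases mem_bottomOrRight_or_topOrLeft (α := α) ((p_le_of_mem_bottomOrRight h.2.1).trans_lt hab)
      (hbc.trans_le (le_q_of_mem_topOrLeft h.2.2)) with hb | hb
    · exact Or.inr ⟨hbc, hb, h.2.2⟩
    · exact Or.inl ⟨hab, h.2.1, hb⟩

def invsBelow (α : Arc n) : Set (Fin n × Fin n) := α.invs \ {(α.p, α.q)}

lemma isInversionSet_invsBelow (α : Arc n) : IsInversionSet α.invsBelow where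
  lt h := h.1.1
  trans h1 h2 := ⟨α.isInversionSet_invs.trans h1.1 h2.1, fun h => by
    cases h; exact notMem_topOrLeft_of_mem_bottomOrRight h2.1.2.1 h1.1.2.2⟩
  split {a b c} h hab hbc := by
    rcases α.isInversionSet_invs.split h.1 hab hbc with h' | h'
    · refine Or.inl ⟨h', fun he => ?_⟩
      cases he
      exact (hbc.trans_le (le_q_of_mem_topOrLeft h.1.2.2)).false
    · refine Or.inr ⟨h', fun he => ?_⟩
      cases he
      exact ((p_le_of_mem_bottomOrRight h.1.2.1).trans_lt hab).false

noncomputable def perm (α : Arc n) : Equiv.Perm (Fin n) := α.isInversionSet_invs.perm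

noncomputable def permBelow (α : Arc n) : Equiv.Perm (Fin n) := α.isInversionSet_invsBelow.perm

lemma invSet_perm (α : Arc n) : invSet α.perm = α.invs := IsInversionSet.invSet_perm _

lemma invSet_permBelow (α : Arc n) : invSet α.permBelow = α.invsBelow :=
  IsInversionSet.invSet_perm _

lemma permBelow_wle_perm (α : Arc n) : wle α.permBelow α.perm := by
  rw [wle, invSet_perm, invSet_permBelow]
  exact Set.sdiff_subset

lemma permBelow_ne_perm (α : Arc n) : α.permBelow ≠ α.perm := fun h => by
  have := congrArg invSet h
  rw [invSet_perm, invSet_permBelow] at this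
  exact (this ▸ α.top_mem_invs).2 rfl

lemma invs_subset_of_top_mem {S C : Set (Fin n × Fin n)} (hS : IsInversionSet S) (hSC : S ⊆ C)
    (htop : (α.p, α.q) ∈ S) (hR : ∀ r ∈ α.R, (α.p, r) ∉ C)
    (hL : ∀ l, α.p < l → l < α.q → l ∉ α.R → (l, α.q) ∉ C) : α.invs ⊆ S := by
  have hRq : ∀ r ∈ α.R, (r, α.q) ∈ S := fun r hr =>
    (hS.split htop (α.hR r hr).1 (α.hR r hr).2).resolve_left fun h => hR r hr (hSC h)
  have hpL : ∀ l, α.p < l → l < α.q → l ∉ α.R → (α.p, l) ∈ S := fun l h1 h2 h3 =>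
    (hS.split htop h1 h2).resolve_right fun h => hL l h1 h2 h3 (hSC h)
  rintro ⟨a, b⟩ ⟨hab, rfl | ha, rfl | ⟨hb1, hb2, hb3⟩⟩
  · exact htop
  · exact hpL b hb1 hb2 hb3
  · exact hRq a ha
  · exact (hS.split (hRq a ha) hab hb2).resolve_right fun h => hL b hb1 hb2 hb3 (hSC h)

lemma eq_perm_or_wle_permBelow {w : Equiv.Perm (Fin n)} (hle : wle w α.perm) :
    w = α.perm ∨ wle w α.permBelow := by
  rw [wle, invSet_perm] at hle
  by_cases htop : (α.p, α.q) ∈ invSet w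
  · refine Or.inl (invSet_injective ((hle.antisymm ?_).trans α.invSet_perm.symm))
    exact invs_subset_of_top_mem (isInversionSet_invSet w) hle htop
      (fun r hr h => notMem_topOrLeft_of_mem_bottomOrRight (Or.inr hr) h.2.2)
      (fun l h1 h2 h3 h => notMem_topOrLeft_of_mem_bottomOrRight h.2.1 (Or.inr ⟨h1, h2, h3⟩))
  · rw [wle, invSet_permBelow]
    exact Or.inr fun pr h => ⟨hle h, fun he => htop (he ▸ h)⟩

lemma covW_permBelow_perm (α : Arc n) : CovW α.permBelow α.perm := by
  refine ⟨α.permBelow_wle_perm, α.permBelow_ne_perm, fun w h1 h2 => ?_⟩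
  rcases eq_perm_or_wle_permBelow h2 with h | h
  · exact Or.inr h
  · exact Or.inl (wle_antisymm h h1)

lemma contractsJ_perm_iff {r : Setoid (Equiv.Perm (Fin n))} :
    ContractsJ r α.perm ↔ r α.perm α.permBelow := by
  refine ⟨fun ⟨y, hcov, hr⟩ => ?_, fun h => ⟨_, α.covW_permBelow_perm, h⟩⟩
  obtain rfl : y = α.permBelow := by
    rcases eq_perm_or_wle_permBelow hcov.1 with h | h
    · exact absurd h hcov.2.1
    · exact ((hcov.2.2 _ h α.permBelow_wle_perm).resolve_right α.permBelow_ne_perm).symm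
  exact hr

end Arc

lemma lt_of_forall_lt_succ {β : Type*} [Preorder β] (f : Fin n → β) {s t : Fin n} (hst : s < t)
    (hf : ∀ (k : Fin n) (hk : (k : ℕ) + 1 < n), s ≤ k → k < t → f k < f ⟨k + 1, hk⟩) :
    f s < f t := by
  obtain ⟨t, ht⟩ := t
  induction t with
  | zero => exact absurd hst (Nat.not_lt_zero _)
  | succ m ih =>
    have hsm : s ≤ ⟨m, by omega⟩ := Nat.lt_succ_iff.1 hst
    have hstep := hf _ ht hsm (Nat.lt_succ_self m)
    rcases hsm.eq_or_lt with hsm | hsm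
    · exact hsm ▸ hstep
    · exact (ih _ hsm fun k hk hsk hkt => hf k hk hsk (hkt.trans (Nat.lt_succ_self m))).trans hstep

lemma mem_diagram_iff {π : Equiv.Perm (Fin n)} {β : Arc n} :
    β ∈ diagram π ↔ ∃ (k : Fin n) (hk : (k : ℕ) + 1 < n), β.p = π ⟨k + 1, hk⟩ ∧ β.q = π k ∧
      ∀ x, β.p < x → x < β.q → (x ∈ β.R ↔ k < π.symm x) := by
  constructor
  · rintro ⟨k, hk, -, hp, hq, hR⟩
    refine ⟨k, hk, hp, hq, fun x h1 h2 => ?_⟩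
    rw [hR]
    exact ⟨fun ⟨l, hl, hlx, _⟩ => by simpa [← hlx], fun h => ⟨_, h, by simp, h1, h2⟩⟩
  · rintro ⟨k, hk, hp, hq, hR⟩
    refine ⟨k, hk, hp ▸ hq ▸ β.hpq, hp, hq, fun x => ⟨fun hx => ?_, ?_⟩⟩
    · obtain ⟨h1, h2⟩ := β.hR x hx
      exact ⟨_, (hR x h1 h2).1 hx, by simp, h1, h2⟩
    · rintro ⟨l, hl, rfl, h1, h2⟩
      exact (hR _ h1 h2).2 (by simpa)

def descentArc (π : Equiv.Perm (Fin n)) (k : Fin n) (hk : (k : ℕ) + 1 < n)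
    (h : π ⟨k + 1, hk⟩ < π k) : Arc n where
  p := π ⟨k + 1, hk⟩
  q := π k
  R := {x | π ⟨k + 1, hk⟩ < x ∧ x < π k ∧ k < π.symm x}
  hpq := h
  hR x hx := by
    simp only [Finset.mem_filter, Finset.mem_univ, true_and] at hx
    exact ⟨hx.1, hx.2.1⟩

lemma descentArc_mem_diagram (π : Equiv.Perm (Fin n)) (k : Fin n) (hk : (k : ℕ) + 1 < n)
    (h : π ⟨k + 1, hk⟩ < π k) : descentArc π k hk h ∈ diagram π :=
  mem_diagram_iff.2 ⟨k, hk, rfl, rfl, fun x h1 h2 => by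
    simp only [descentArc, Finset.mem_filter, Finset.mem_univ, true_and]
    exact ⟨fun h => h.2.2, fun h => ⟨h1, h2, h⟩⟩⟩

/-- The inversion set of the permutation listing the values outside `Y` increasingly, followed by
the values in `Y` increasingly. -/
def blockInv (Y : Set (Fin n)) : Set (Fin n × Fin n) := {pr | pr.1 < pr.2 ∧ pr.1 ∈ Y ∧ pr.2 ∉ Y}

lemma symm_lt_symm_iff_of_invSet_eq_blockInv {π : Equiv.Perm (Fin n)} {Y : Set (Fin n)}
    (h : invSet π = blockInv Y) {w v : Fin n} :
    π.symm w < π.symm v ↔ (w ∉ Y ∧ v ∈ Y) ∨ ((w ∈ Y ↔ v ∈ Y) ∧ w < v) := by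
  rw [← precedes_invSet_iff, h, Precedes, blockInv]
  simp only [Set.mem_ofPred_eq]
  rcases lt_trichotomy w v with hwv | rfl | hwv <;> grind

lemma invSet_eq_blockInv_of_increasing_blocks {π : Equiv.Perm (Fin n)} {i : Fin n}
    (hmono : ∀ s t, s < t → t ≤ i ∨ i < s → π s < π t) :
    invSet π = blockInv {v | i < π.symm v} := by
  ext ⟨a, b⟩
  simp only [invSet, blockInv, Set.mem_ofPred_eq, not_lt, and_congr_right_iff]
  intro hab
  constructor
  · intro h
    refine ⟨?_, ?_⟩ <;> by_contra! hc
    · exact (hmono _ _ h (Or.inl hc)).not_gt (by simpa using hab)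
    · exact (hmono _ _ h (Or.inr hc)).not_gt (by simpa using hab)
  · exact fun ⟨ha, hb⟩ => hb.trans_lt ha

namespace Arc

section Diagram

variable {α : Arc n} {v : Fin n}

/-- The values occurring after the descent of `α.perm`. -/
def block (α : Arc n) : Set (Fin n) := {v | v = α.p ∨ v ∈ α.R ∨ α.q < v}

lemma p_mem_block (α : Arc n) : α.p ∈ α.block := Or.inl rfl

lemma q_notMem_block (α : Arc n) : α.q ∉ α.block := by
  rintro (h | h | h)
  · exact α.hpq.ne h.symm
  · exact lt_irrefl _ (α.hR _ h).2
  · exact lt_irrefl _ h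

lemma p_le_of_mem_block (h : v ∈ α.block) : α.p ≤ v := by
  rcases h with rfl | h | h
  exacts [le_rfl, (α.hR _ h).1.le, (α.hpq.trans h).le]

lemma le_q_of_notMem_block (h : v ∉ α.block) : v ≤ α.q :=
  not_lt.1 fun hv => h (Or.inr (Or.inr hv))

lemma mem_block_iff_mem_R (h1 : α.p < v) (h2 : v < α.q) : v ∈ α.block ↔ v ∈ α.R := by
  simp [block, h1.ne', h2.not_gt]

lemma invs_eq_blockInv (α : Arc n) : α.invs = blockInv α.block := by
  ext ⟨a, b⟩
  have := α.hR a; have := α.hR b; have := α.hpq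
  simp only [invs, blockInv, bottomOrRight, topOrLeft, block, Set.mem_ofPred_eq]
  grind

lemma symm_lt_symm_iff {w v : Fin n} : α.perm.symm w < α.perm.symm v ↔
    (w ∉ α.block ∧ v ∈ α.block) ∨ ((w ∈ α.block ↔ v ∈ α.block) ∧ w < v) :=
  symm_lt_symm_iff_of_invSet_eq_blockInv (α.invSet_perm.trans α.invs_eq_blockInv)

lemma perm_descent {k : Fin n} {hk : (k : ℕ) + 1 < n} (h : α.perm ⟨k + 1, hk⟩ < α.perm k) :
    α.perm k = α.q ∧ α.perm ⟨k + 1, hk⟩ = α.p := by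
  set π := α.perm
  have hab : π k ∉ α.block ∧ π ⟨k + 1, hk⟩ ∈ α.block := by
    rcases symm_lt_symm_iff.1 (by simp [Fin.lt_def] : π.symm (π k) < π.symm (π ⟨k + 1, hk⟩))
      with h' | ⟨-, h'⟩
    exacts [h', absurd h' h.not_gt]
  have no_between : ∀ v, ¬ (π.symm (π k) < π.symm v ∧ π.symm v < π.symm (π ⟨k + 1, hk⟩)) := by
    simp only [Equiv.symm_apply_apply, Fin.lt_def]
    omega
  constructor
  · refine (le_q_of_notMem_block hab.1).antisymm (not_lt.1 fun hlt => no_between α.q ⟨?_, ?_⟩)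
    · exact symm_lt_symm_iff.2 (Or.inr ⟨by simp [hab.1, q_notMem_block], hlt⟩)
    · exact symm_lt_symm_iff.2 (Or.inl ⟨q_notMem_block α, hab.2⟩)
  · refine ((p_le_of_mem_block hab.2).antisymm (not_lt.1 fun hlt => no_between α.p ⟨?_, ?_⟩)).symm
    · exact symm_lt_symm_iff.2 (Or.inl ⟨hab.1, p_mem_block α⟩)
    · exact symm_lt_symm_iff.2 (Or.inr ⟨by simp [hab.2, p_mem_block], hlt⟩)

theorem diagram_perm (α : Arc n) : diagram α.perm = {α} := by
  set π := α.perm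
  have hR : ∀ x, α.p < x → x < α.q → (x ∈ α.R ↔ π.symm α.q < π.symm x) := fun x h1 h2 => by
    rw [← mem_block_iff_mem_R h1 h2, symm_lt_symm_iff]
    simp [q_notMem_block, h2.not_gt]
  have hdiag : ∀ β ∈ diagram π, β = α := by
    intro β hβ
    obtain ⟨k, hk, hp, hq, hRβ⟩ := mem_diagram_iff.1 hβ
    obtain ⟨hkq, hkp⟩ := perm_descent (hp ▸ hq ▸ β.hpq : π ⟨k + 1, hk⟩ < π k)
    have hpp : β.p = α.p := hp.trans hkp
    have hqq : β.q = α.q := hq.trans hkq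
    have hk : π.symm α.q = k := hkq ▸ π.symm_apply_apply k
    refine Arc.ext hpp hqq (Finset.ext fun x => ?_)
    by_cases hx : α.p < x ∧ x < α.q
    · rw [hRβ x (hpp ▸ hx.1) (hqq ▸ hx.2), hR x hx.1 hx.2, hk]
    · exact iff_of_false (fun h => hx (hpp ▸ hqq ▸ β.hR x h)) (fun h => hx (α.hR x h))
  obtain ⟨k, hk, hdesc⟩ : ∃ (k : Fin n) (hk : (k : ℕ) + 1 < n), π ⟨k + 1, hk⟩ < π k := by
    by_contra! h
    have hqp : π.symm α.q < π.symm α.p :=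
      symm_lt_symm_iff.2 (Or.inl ⟨q_notMem_block α, p_mem_block α⟩)
    have := lt_of_forall_lt_succ π hqp fun k hk _ _ =>
      (h k hk).lt_of_ne (π.injective.ne (Fin.ne_of_val_ne (by simp)))
    simp only [Equiv.apply_symm_apply] at this
    exact α.hpq.not_gt this
  have hmem := descentArc_mem_diagram π k hk hdesc
  exact Set.eq_singleton_iff_unique_mem.2 ⟨hdiag _ hmem ▸ hmem, hdiag⟩

lemma setOf_lt_symm_eq_block {j : Equiv.Perm (Fin n)} {i : Fin n} {hi : (i : ℕ) + 1 < n}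
    (hp : α.p = j ⟨i + 1, hi⟩) (hq : α.q = j i)
    (hR : ∀ x, α.p < x → x < α.q → (x ∈ α.R ↔ i < j.symm x))
    (hmono : ∀ s t, s < t → t ≤ i ∨ i < s → j s < j t) :
    {v | i < j.symm v} = α.block := by
  have hposp : j.symm α.p = ⟨i + 1, hi⟩ := by rw [hp]; simp
  have hposq : j.symm α.q = i := by rw [hq]; simp
  ext v
  simp only [Set.mem_ofPred_eq]
  by_cases hv : i < j.symm v
  · refine iff_of_true hv ?_
    rcases eq_or_ne v α.p with rfl | hvp
    · exact p_mem_block α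
    have hpv : α.p < v := by
      have hiv : (⟨i + 1, hi⟩ : Fin n) < j.symm v :=
        (Nat.succ_le_of_lt hv).lt_of_ne fun h => hvp <| by
          rw [← j.apply_symm_apply v, show j.symm v = ⟨i + 1, hi⟩ from Fin.ext h.symm, hp]
      simpa [← hp] using hmono _ _ hiv (Or.inr (Nat.lt_succ_self i))
    rcases lt_trichotomy v α.q with hvq | rfl | hvq
    · exact Or.inr (Or.inl ((hR v hpv hvq).2 hv))
    · exact absurd hposq hv.ne'
    · exact Or.inr (Or.inr hvq)
  · refine iff_of_false hv fun hvb => ?_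
    rcases eq_or_ne v α.q with rfl | hvq
    · exact q_notMem_block α hvb
    have hvq' : v < α.q := by
      have hvi : j.symm v < i :=
        (not_lt.1 hv).lt_of_ne fun h => hvq (by rw [← j.apply_symm_apply v, h, hq])
      simpa [← hq] using hmono _ _ hvi (Or.inl le_rfl)
    rcases (p_le_of_mem_block hvb).eq_or_lt with rfl | hpv
    · exact hv (hposp ▸ Nat.lt_succ_self i)
    · exact hv ((hR v hpv hvq').1 ((mem_block_iff_mem_R hpv hvq').1 hvb))

theorem eq_perm_of_diagram {j : Equiv.Perm (Fin n)} (hd : diagram j = {α}) : j = α.perm := by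
  obtain ⟨i, hi, hp, hq, hR⟩ := mem_diagram_iff.1 (hd ▸ Set.mem_singleton α)
  have hasc : ∀ (k : Fin n) (hk : (k : ℕ) + 1 < n), k ≠ i → j k < j ⟨k + 1, hk⟩ := by
    intro k hk hki
    by_contra! h
    have hβ := hd ▸ descentArc_mem_diagram j k hk
      (h.lt_of_ne (j.injective.ne (Fin.ne_of_val_ne (by simp))))
    exact hki (j.injective (hq ▸ congrArg Arc.q hβ))
  have hmono : ∀ s t, s < t → t ≤ i ∨ i < s → j s < j t := by
    refine fun s t hst h => lt_of_forall_lt_succ j hst fun k hk hsk hkt => hasc k hk ?_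
    rintro rfl
    rcases h with h | h
    exacts [(hkt.trans_le h).false, (h.trans_le hsk).false]
  apply invSet_injective
  rw [invSet_eq_blockInv_of_increasing_blocks hmono, setOf_lt_symm_eq_block hp hq hR hmono,
    invSet_perm, invs_eq_blockInv]

lemma perm_injective : Function.Injective (Arc.perm : Arc n → Equiv.Perm (Fin n)) :=
  fun α β h => Set.singleton_injective (by rw [← diagram_perm, h, diagram_perm])

end Diagram

section Forcing

variable {α α' : Arc n} {u v : Fin n}

/-- The inversion sets of `α` restricted to `[α.p, α'.p]` and to `[α'.q, α.q]`. -/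
def outsideStep (α α' : Arc n) (a b : Fin n) : Prop :=
  (a < b ∧ a ∈ α.bottomOrRight ∧ (b = α'.p ∨ (b ∈ α.topOrLeft ∧ b < α'.p))) ∨
  (a < b ∧ (a = α'.q ∨ (a ∈ α.bottomOrRight ∧ α'.q < a)) ∧ b ∈ α.topOrLeft)

lemma isSplitRel_outsideStep (hsub : Subarc α' α) : IsSplitRel (outsideStep α α') where
  lt h := h.elim (·.1) (·.1)
  split {a b c} h hab hbc := by
    rcases h with ⟨-, ha, hc⟩ | ⟨-, ha, hc⟩
    · have hbp' : b < α'.p := by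
        rcases hc with rfl | ⟨-, hc⟩
        exacts [hbc, hbc.trans hc]
      rcases mem_bottomOrRight_or_topOrLeft (α := α) ((p_le_of_mem_bottomOrRight ha).trans_lt hab)
        (hbp'.trans (α'.hpq.trans_le hsub.2.1)) with hb | hb
      · exact Or.inr (Or.inl ⟨hbc, hb, hc⟩)
      · exact Or.inl (Or.inl ⟨hab, ha, Or.inr ⟨hb, hbp'⟩⟩)
    · have hq'b : α'.q < b := by
        rcases ha with rfl | ⟨-, ha⟩
        exacts [hab, ha.trans hab]
      rcases mem_bottomOrRight_or_topOrLeft (α := α)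
        ((hsub.1.trans α'.hpq.le).trans_lt hq'b) (hbc.trans_le (le_q_of_mem_topOrLeft hc))
        with hb | hb
      · exact Or.inr (Or.inr ⟨hbc, Or.inr ⟨hb, hq'b⟩, hc⟩)
      · exact Or.inl (Or.inr ⟨hab, ha, hb⟩)

noncomputable def outsidePerm (hsub : Subarc α' α) : Equiv.Perm (Fin n) :=
  (isSplitRel_outsideStep hsub).isInversionSet_transGen.perm

lemma invSet_outsidePerm (hsub : Subarc α' α) :
    invSet (outsidePerm hsub) = {pr | TransGen (outsideStep α α') pr.1 pr.2} :=
  IsInversionSet.invSet_perm _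

lemma mem_bottomOrRight_of_subarc (hsub : Subarc α' α) (h : u ∈ α.bottomOrRight)
    (h1 : α'.p ≤ u) (h2 : u < α'.q) : u ∈ α'.bottomOrRight := by
  rcases h1.eq_or_lt with rfl | hlt
  · exact Or.inl rfl
  · rcases h with rfl | hR
    · exact absurd (hsub.1.trans_lt hlt) (lt_irrefl _)
    · exact Or.inr ((hsub.2.2 u).2 ⟨hR, hlt, h2⟩)

lemma mem_topOrLeft_of_subarc (hsub : Subarc α' α) (h : v ∈ α.topOrLeft)
    (h1 : α'.p < v) (h2 : v ≤ α'.q) : v ∈ α'.topOrLeft := by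
  rcases h2.eq_or_lt with rfl | hlt
  · exact Or.inl rfl
  · rcases h with rfl | ⟨-, -, hnR⟩
    · exact absurd (hlt.trans_le hsub.2.1) (lt_irrefl _)
    · exact Or.inr ⟨h1, hlt, fun hc => hnR ((hsub.2.2 v).1 hc).1⟩

lemma transGen_of_mem_invs (hsub : Subarc α' α) (huv : (u, v) ∈ α.invs) :
    TransGen (fun a b => (a, b) ∈ α'.invs ∨ outsideStep α α' a b) u v := by
  obtain ⟨huv, hu, hv⟩ := huv
  have from_p' : ∀ {v}, v ∈ α.topOrLeft → α'.p < v →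
      TransGen (fun a b => (a, b) ∈ α'.invs ∨ outsideStep α α' a b) α'.p v := by
    intro v hv hpv
    rcases le_or_gt v α'.q with hle | hlt
    · exact .single (Or.inl ⟨hpv, Or.inl rfl, mem_topOrLeft_of_subarc hsub hv hpv hle⟩)
    · exact .tail (.single (Or.inl α'.top_mem_invs)) (Or.inr (Or.inr ⟨hlt, Or.inl rfl, hv⟩))
  rcases lt_trichotomy u α'.p with hup | rfl | hup
  · rcases le_or_gt v α'.p with hle | hlt
    · rcases hle.eq_or_lt with rfl | hvlt
      · exact .single (Or.inr (Or.inl ⟨huv, hu, Or.inl rfl⟩))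
      · exact .single (Or.inr (Or.inl ⟨huv, hu, Or.inr ⟨hv, hvlt⟩⟩))
    · exact .trans (.single (Or.inr (Or.inl ⟨hup, hu, Or.inl rfl⟩))) (from_p' hv hlt)
  · exact from_p' hv huv
  · rcases lt_trichotomy u α'.q with huq | rfl | huq
    · have hu' := mem_bottomOrRight_of_subarc hsub hu hup.le huq
      rcases le_or_gt v α'.q with hle | hlt
      · exact .single (Or.inl ⟨huv, hu', mem_topOrLeft_of_subarc hsub hv (hup.trans huv) hle⟩)
      · exact .tail (.single (Or.inl ⟨huq, hu', Or.inl rfl⟩))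
          (Or.inr (Or.inr ⟨hlt, Or.inl rfl, hv⟩))
    · exact .single (Or.inr (Or.inr ⟨huv, Or.inl rfl, hv⟩))
    · exact .single (Or.inr (Or.inr ⟨huv, Or.inr ⟨hu, huq⟩, hv⟩))

lemma perm_wle_wjoin_outsidePerm (hsub : Subarc α' α) :
    wle α.perm (wjoin α'.perm (outsidePerm hsub)) := by
  rintro ⟨u, v⟩ huv
  rw [invSet_perm] at huv
  rw [invSet_wjoin, joinInvSet, invSet_perm, invSet_outsidePerm]
  exact TransGen.mono (fun a b => Or.imp id .single) _ _ (transGen_of_mem_invs hsub huv)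

/-- Being right of `α'` or weakly right of `α'.q` propagates backwards along the generating steps;
`α.q` has this property and `α.p` does not. -/
lemma top_notMem_invSet_wjoin (hsub : Subarc α' α) :
    (α.p, α.q) ∉ invSet (wjoin α'.permBelow (outsidePerm hsub)) := by
  rw [invSet_wjoin, joinInvSet, invSet_permBelow, invSet_outsidePerm]
  intro (h : TransGen _ α.p α.q)
  have hbelow : ∀ c b, (c, b) ∈ α'.invsBelow → b ∈ α'.R ∨ α'.q ≤ b → c ∈ α'.R ∨ α'.q ≤ c := by
    rintro c b ⟨⟨-, hc, hb⟩, hne⟩ hP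
    obtain rfl : b = α'.q := by
      rcases hb with rfl | ⟨-, hbq, hbR⟩
      · rfl
      · exact absurd hP (by simp [hbR, hbq.not_ge])
    rcases hc with rfl | hc
    exacts [absurd rfl hne, Or.inl hc]
  have houtside : ∀ c b, outsideStep α α' c b → b ∈ α'.R ∨ α'.q ≤ b → c ∈ α'.R ∨ α'.q ≤ c := by
    rintro c b (⟨-, -, hb⟩ | ⟨-, hc, -⟩) hP
    · have hbp : b ≤ α'.p := by rcases hb with rfl | ⟨-, hb⟩; exacts [le_rfl, hb.le]
      rcases hP with hP | hP
      exacts [absurd (hbp.trans_lt (α'.hR b hP).1) (lt_irrefl _),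
        absurd (hbp.trans_lt α'.hpq) hP.not_gt]
    · rcases hc with rfl | ⟨-, hc⟩
      exacts [Or.inr le_rfl, Or.inr hc.le]
  rcases h.backward_invariant (fun c b hcb => hcb.elim (hbelow c b)
      fun hcb => hcb.backward_invariant houtside) (Or.inr hsub.2.1) with hp | hp
  · exact (hsub.1.trans_lt (α'.hR _ hp).1).false
  · exact ((hp.trans hsub.1).trans_lt α'.hpq).false

theorem rel_perm_permBelow_of_subarc {r : Setoid (Equiv.Perm (Fin n))} (hr : IsWeakCong r)
    (hsub : Subarc α' α) (h : r α'.perm α'.permBelow) : r α.perm α.permBelow := by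
  set w := outsidePerm hsub
  have hjoin : r (wjoin α'.perm w) (wjoin α'.permBelow w) :=
    hr.1 _ _ _ _ _ _ h (r.refl w) (isLUBw_wjoin _ _) (isLUBw_wjoin _ _)
  set m := wmeet (wjoin α'.permBelow w) α.perm
  have hm := isGLBw_wmeet (wjoin α'.permBelow w) α.perm
  have hmeet : r α.perm m := hr.2 _ _ _ _ _ _ hjoin (r.refl _)
    ⟨perm_wle_wjoin_outsidePerm hsub, wle_refl _, fun _ _ hb => hb⟩ hm
  have hm_le : wle m α.permBelow :=
    (eq_perm_or_wle_permBelow hm.2.1).resolve_left fun he => top_notMem_invSet_wjoin hsub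
      (hm.1 (by rw [he, invSet_perm]; exact α.top_mem_invs))
  exact hr.1 _ _ _ _ _ _ hmeet (r.refl _) ⟨wle_refl _, α.permBelow_wle_perm, fun _ hb _ => hb⟩
    ⟨hm_le, wle_refl _, fun _ _ hb => hb⟩

end Forcing

section Restrict

variable {γ : Arc n}

def restrict (γ : Arc n) (s t : Fin n) (hst : s < t) : Arc n where
  p := s
  q := t
  R := γ.R.filter fun x => s < x ∧ x < t
  hpq := hst
  hR _ hx := (Finset.mem_filter.1 hx).2

lemma subarc_restrict {s t : Fin n} (hst : s < t) (hs : γ.p ≤ s) (ht : t ≤ γ.q) :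
    Subarc (γ.restrict s t hst) γ :=
  ⟨hs, ht, fun _ => Finset.mem_filter⟩

lemma mem_invs_restrict {s t u v : Fin n} {hst : s < t} :
    (u, v) ∈ (γ.restrict s t hst).invs ↔ u < v ∧ (u = s ∨ (u ∈ γ.R ∧ s < u ∧ u < t)) ∧
      (v = t ∨ (s < v ∧ v < t ∧ v ∉ γ.R)) := by
  simp only [invs, bottomOrRight, topOrLeft, restrict, Set.mem_ofPred_eq, Finset.mem_filter]
  grind

lemma invs_subset_of_restrict {C : Set (Fin n × Fin n)}
    (hC : ∀ {a b c}, (a, b) ∈ C → (b, c) ∈ C → (a, c) ∈ C) {t : Fin n} (hpt : γ.p < t)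
    (htq : t < γ.q) (hleft : (γ.restrict γ.p t hpt).invs ⊆ C)
    (hright : (γ.restrict t γ.q htq).invs ⊆ C) : γ.invs ⊆ C := by
  have hl := fun u v h => @hleft (u, v) (mem_invs_restrict.2 h)
  have hr := fun u v h => @hright (u, v) (mem_invs_restrict.2 h)
  rintro ⟨a, b⟩ hab
  rw [mem_invs] at hab
  have := γ.hR a
  by_cases hthrough : a < t ∧ t < b
  · exact hC (hl a t (by grind)) (hr t b (by grind))
  · rcases le_or_gt t a with hta | hat
    · exact hr a b (by grind)
    · exact hl a b (by grind)

lemma restrict_invs_subset {J : Set (Fin n × Fin n)} (h : γ.invs ⊆ J) {t : Fin n}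
    (hpt : γ.p < t) (htq : t < γ.q) (hleft : ∀ u ∈ γ.bottomOrRight, u < t → (u, t) ∈ J)
    (hright : ∀ v ∈ γ.topOrLeft, t < v → (t, v) ∈ J) :
    (γ.restrict γ.p t hpt).invs ⊆ J ∧ (γ.restrict t γ.q htq).invs ⊆ J := by
  have hγ := fun u v huv => @h (u, v) (mem_invs.2 huv)
  constructor <;> rintro ⟨a, b⟩ hab <;> rw [mem_invs_restrict] at hab
  · obtain ⟨hab, ha, rfl | hb⟩ := hab
    · exact hleft a (by grind [bottomOrRight]) hab
    · exact hγ a b (by grind)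
  · obtain ⟨hab, rfl | ha, hb⟩ := hab
    · exact hright b (by grind [topOrLeft]) hab
    · exact hγ a b (by grind)

/-- The split point is the largest `l` left of `γ` with `(l, γ.q)` inverted by `x ∨ y`, or else
the smallest `r` right of `γ` with `(γ.p, r)` inverted; if neither exists, `(γ.p, γ.q)` is a single
step of the transitive closure, so it is inverted by `x` or by `y`. -/
lemma invs_subset_or_exists_split {x y : Equiv.Perm (Fin n)} (h : γ.invs ⊆ joinInvSet x y) :
    γ.invs ⊆ invSet x ∨ γ.invs ⊆ invSet y ∨ ∃ (t : Fin n) (hpt : γ.p < t) (htq : t < γ.q),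
      (γ.restrict γ.p t hpt).invs ⊆ joinInvSet x y ∧
        (γ.restrict t γ.q htq).invs ⊆ joinInvSet x y := by
  set J := joinInvSet x y
  have hJ := isInversionSet_joinInvSet x y
  by_cases hL : ∃ l, γ.p < l ∧ l < γ.q ∧ l ∉ γ.R ∧ (l, γ.q) ∈ J
  · obtain ⟨t, ⟨hpt, htq, htR, htJ⟩, hmax⟩ := Set.exists_max_image _ id (Set.toFinite _) hL
    refine Or.inr (Or.inr ⟨t, hpt, htq, restrict_invs_subset h hpt htq
      (fun u hu hut => h ⟨hut, hu, Or.inr ⟨hpt, htq, htR⟩⟩) fun v hv htv => ?_⟩)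
    rcases hv with rfl | ⟨-, hvq, hvR⟩
    · exact htJ
    · exact (hJ.split htJ htv hvq).resolve_right fun hvJ =>
        (hmax v ⟨hpt.trans htv, hvq, hvR, hvJ⟩).not_gt htv
  by_cases hR : ∃ r, r ∈ γ.R ∧ (γ.p, r) ∈ J
  · obtain ⟨t, ⟨htR, htJ⟩, hmin⟩ := Set.exists_min_image _ id (Set.toFinite _) hR
    obtain ⟨hpt, htq⟩ := γ.hR t htR
    refine Or.inr (Or.inr ⟨t, hpt, htq, restrict_invs_subset h hpt htq (fun u hu hut => ?_)
      fun v hv htv => h ⟨htv, Or.inr htR, hv⟩⟩)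
    rcases hu with rfl | huR
    · exact htJ
    · exact (hJ.split htJ (γ.hR u huR).1 hut).resolve_left fun huJ =>
        (hmin u ⟨huR, huJ⟩).not_gt hut
  push Not at hL hR
  have htop : (γ.p, γ.q) ∈ invSet x ∨ (γ.p, γ.q) ∈ invSet y := by
    cases (h γ.top_mem_invs : TransGen _ γ.p γ.q) with
    | single h => exact h
    | @tail c _ hpc hcq =>
      have hcq : (c, γ.q) ∈ J := .single hcq
      by_cases hcR : c ∈ γ.R
      · exact absurd hpc (hR c hcR)
      · exact absurd hcq (hL c (hJ.lt hpc) (hJ.lt hcq) hcR)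
  rcases htop with hx | hy
  · exact Or.inl (invs_subset_of_top_mem (isInversionSet_invSet x)
      (invSet_subset_joinInvSet_left x y) hx hR hL)
  · exact Or.inr (Or.inl (invs_subset_of_top_mem (isInversionSet_invSet y)
      (invSet_subset_joinInvSet_right x y) hy hR hL))

end Restrict

end Arc

def congrOf (U : Set (Arc n)) : Setoid (Equiv.Perm (Fin n)) where
  r u w := ∀ β ∈ U, (wle β.perm u ↔ wle β.perm w)
  iseqv := ⟨fun _ _ _ => Iff.rfl, fun h β hβ => (h β hβ).symm,
    fun h1 h2 β hβ => (h1 β hβ).trans (h2 β hβ)⟩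

section CongrOf

variable {U : Set (Arc n)} (hU : ∀ α ∈ U, ∀ α' : Arc n, Subarc α' α → α' ∈ U)
include hU

lemma invs_subset_joinInvSet_of_congrOf {x₁ x₂ y₁ y₂ : Equiv.Perm (Fin n)}
    (hx : congrOf U x₁ x₂) (hy : congrOf U y₁ y₂) {β : Arc n} (hβ : β ∈ U)
    (h : β.invs ⊆ joinInvSet x₁ y₁) : β.invs ⊆ joinInvSet x₂ y₂ := by
  induction hd : (β.q : ℕ) - β.p using Nat.strong_induction_on generalizing β with
  | _ d ih =>
  rcases β.invs_subset_or_exists_split h with hx₁ | hy₁ | ⟨t, hpt, htq, hl, hr⟩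
  · have := (hx β hβ).1 (by rwa [wle, Arc.invSet_perm])
    rw [wle, Arc.invSet_perm] at this
    exact this.trans (invSet_subset_joinInvSet_left _ _)
  · have := (hy β hβ).1 (by rwa [wle, Arc.invSet_perm])
    rw [wle, Arc.invSet_perm] at this
    exact this.trans (invSet_subset_joinInvSet_right _ _)
  · refine Arc.invs_subset_of_restrict (isInversionSet_joinInvSet _ _).trans hpt htq
      (ih _ ?_ (hU β hβ _ (Arc.subarc_restrict hpt le_rfl htq.le)) hl rfl)
      (ih _ ?_ (hU β hβ _ (Arc.subarc_restrict htq hpt.le le_rfl)) hr rfl)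
    all_goals simp only [Arc.restrict, Fin.lt_def] at hpt htq ⊢; omega

theorem isWeakCong_congrOf : IsWeakCong (congrOf U) := by
  constructor
  · intro x₁ x₂ y₁ y₂ m₁ m₂ hx hy hm₁ hm₂ β hβ
    rw [hm₁.eq_wjoin, hm₂.eq_wjoin, wle, wle, invSet_wjoin, invSet_wjoin, Arc.invSet_perm]
    exact ⟨invs_subset_joinInvSet_of_congrOf hU hx hy hβ,
      invs_subset_joinInvSet_of_congrOf hU ((congrOf U).symm hx) ((congrOf U).symm hy) hβ⟩
  · intro x₁ x₂ y₁ y₂ m₁ m₂ hx hy hm₁ hm₂ β hβ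
    rw [hm₁.wle_iff, hm₂.wle_iff, hx β hβ, hy β hβ]

end CongrOf

lemma not_contractsJ_congrOf {U : Set (Arc n)} {α : Arc n} (hα : α ∈ U) :
    ¬ ContractsJ (congrOf U) α.perm := by
  rw [Arc.contractsJ_perm_iff]
  exact fun h => α.permBelow_ne_perm (wle_antisymm α.permBelow_wle_perm ((h α hα).1 (wle_refl _)))

lemma contractsJ_congrOf {U : Set (Arc n)} {α : Arc n} (hα : α ∉ U) :
    ContractsJ (congrOf U) α.perm := by
  rw [Arc.contractsJ_perm_iff]
  refine fun β hβ => ⟨fun h => ?_, fun h => wle_trans h α.permBelow_wle_perm⟩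
  refine (Arc.eq_perm_or_wle_permBelow h).resolve_left fun he => hα ?_
  exact Arc.perm_injective he ▸ hβ

/-- A set `U` of arcs is the set of arcs of the uncontracted join-irreducible
permutations of some lattice congruence of the weak order on `S_n` if and only if
`U` is closed under passing to subarcs. -/
theorem stmt14 (n : ℕ) (U : Set (Arc n)) :
    (∃ r : Setoid (Equiv.Perm (Fin n)), IsWeakCong r ∧
        ∀ α : Arc n, α ∈ U ↔ ∃ j : Equiv.Perm (Fin n),
          diagram j = {α} ∧ ¬ ContractsJ r j) ↔
      (∀ α ∈ U, ∀ α' : Arc n, Subarc α' α → α' ∈ U) := by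
  constructor
  · rintro ⟨r, hr, hU⟩ α hα α' hsub
    obtain ⟨j, hj, hnc⟩ := (hU α).1 hα
    rw [Arc.eq_perm_of_diagram hj, Arc.contractsJ_perm_iff] at hnc
    refine (hU α').2 ⟨α'.perm, α'.diagram_perm, fun hc => hnc ?_⟩
    exact Arc.rel_perm_permBelow_of_subarc hr hsub (Arc.contractsJ_perm_iff.1 hc)
  · intro hU
    refine ⟨congrOf U, isWeakCong_congrOf hU, fun α => ⟨fun hα => ?_, ?_⟩⟩
    · exact ⟨α.perm, α.diagram_perm, not_contractsJ_congrOf hα⟩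
    · rintro ⟨j, hj, hnc⟩
      by_contra hα
      exact hnc (Arc.eq_perm_of_diagram hj ▸ contractsJ_congrOf hα)
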